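/- arXiv:1801.03437 — 2 statements merged into one kernel-verified Lean document; each statement's English description precedes it below -/
import Mathlib

section
/- Let L be a real Hilbert space with a countable Hilbert (complete orthonormal) basis (e_i)_{i ∈ ℕ}, fix an integer d ≥ 1 and constants C > 0, M ≥ 0. Suppose f ∈ L has Fourier coefficients a_i = ⟨f, e_i⟩ satisfying a_i² ≤ M² · exp(−C i^{1/d}) for all i. Then there exist a constant C″ > 0 and a threshold k₀ ∈ ℕ, depending only on C and d, such that for all k ≥ k₀ the truncation g_k = ∑_{i ≤ k} a_i e_i satisfies ‖f − g_k‖_L² ≤ M² · C″ · k^{(d−1)/d} · exp(−C k^{1/d}). In particular, f is nearly exponentially approximated by elements of the span of the first k basis vectors. -/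
open scoped InnerProductSpace
open Real Filter Finset Asymptotics

/-! By Parseval, the squared truncation error is the tail `∑_{m ≥ 1} a_{k+m}² ≤
M² ∑_{m ≥ 1} exp (-C (k + m)^p)` with `p = 1/d`. Concavity of `t ↦ t^p` gives, with
`c = 2^p - 1`, the lower bounds `(k + m)^p ≥ k^p + c k^(p-1) m` for `m ≤ k` (the chord from `k`
to `2k`) and `(k + m)^p ≥ k^p + c m^p` for `m ≥ k` (the midpoint inequality). Hence every term is
at most `exp (-C k^p)` times `exp (-C c k^(p-1) m) + exp (-C c m^p)`: the first part sums to a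
geometric series bounded by `k^(1-p) / (C c)`, the second to a constant. -/

section

variable {p : ℝ}

lemma rpow_add_mul_le_add_rpow_of_le (hp₀ : 0 ≤ p) (hp₁ : p ≤ 1) {k m : ℝ} (hk : 0 < k)
    (hm : 0 ≤ m) (hmk : m ≤ k) :
    k ^ p + (2 ^ p - 1) * k ^ (p - 1) * m ≤ (k + m) ^ p := by
  have hconc := (concaveOn_rpow hp₀ hp₁).2 (Set.mem_Ici.2 hk.le)
    (Set.mem_Ici.2 (by positivity : (0 : ℝ) ≤ 2 * k))
    (sub_nonneg.2 ((div_le_one hk).2 hmk)) (div_nonneg hm hk.le) (sub_add_cancel _ _)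
  have hpt : (1 - m / k) * k + m / k * (2 * k) = k + m := by field_simp; ring
  simp only [smul_eq_mul] at hconc
  rw [hpt, mul_rpow zero_le_two hk.le] at hconc
  calc k ^ p + (2 ^ p - 1) * k ^ (p - 1) * m
      = (1 - m / k) * k ^ p + m / k * (2 ^ p * k ^ p) := by
        rw [rpow_sub_one hk.ne']; field_simp; ring
    _ ≤ (k + m) ^ p := hconc

lemma rpow_add_mul_rpow_le_add_rpow_of_le (hp₀ : 0 ≤ p) (hp₁ : p ≤ 1) {k m : ℝ} (hk : 0 ≤ k)
    (hkm : k ≤ m) :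
    k ^ p + (2 ^ p - 1) * m ^ p ≤ (k + m) ^ p := by
  have hm : 0 ≤ m := hk.trans hkm
  have hmid := (concaveOn_rpow hp₀ hp₁).2 (Set.mem_Ici.2 hk) (Set.mem_Ici.2 hm)
    (by norm_num : (0 : ℝ) ≤ 1 / 2) (by norm_num : (0 : ℝ) ≤ 1 / 2) (by norm_num)
  have hpt : 1 / 2 * k + 1 / 2 * m = (k + m) / 2 := by ring
  simp only [smul_eq_mul] at hmid
  rw [hpt, div_rpow (by positivity) zero_le_two] at hmid
  have htwo_pos : (0 : ℝ) < 2 ^ p := by positivity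
  have htwo_le : (2 : ℝ) ^ p ≤ 2 := by
    simpa using rpow_le_rpow_of_exponent_le one_le_two hp₁
  have hmono : k ^ p ≤ m ^ p := rpow_le_rpow hk hkm hp₀
  rw [le_div_iff₀ htwo_pos] at hmid
  nlinarith

lemma exp_neg_mul_add_rpow_le (hp₀ : 0 ≤ p) (hp₁ : p ≤ 1) {C k m : ℝ} (hC : 0 ≤ C) (hk : 0 < k)
    (hm : 0 ≤ m) :
    exp (-C * (k + m) ^ p) ≤ exp (-C * k ^ p) *
      (exp (-(C * (2 ^ p - 1) * k ^ (p - 1)) * m) + exp (-(C * (2 ^ p - 1)) * m ^ p)) := by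
  rw [mul_add, ← exp_add, ← exp_add]
  rcases le_total m k with hmk | hkm
  · have h := rpow_add_mul_le_add_rpow_of_le hp₀ hp₁ hk hm hmk
    refine (exp_le_exp.2 ?_).trans (le_add_of_nonneg_right (exp_nonneg _))
    nlinarith
  · have h := rpow_add_mul_rpow_le_add_rpow_of_le hp₀ hp₁ hk.le hkm
    refine (exp_le_exp.2 ?_).trans (le_add_of_nonneg_left (exp_nonneg _))
    nlinarith

lemma summable_exp_neg_mul_rpow (hp : 0 < p) {a : ℝ} (ha : 0 < a) :
    Summable fun n : ℕ => exp (-a * (n : ℝ) ^ p) := by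
  have hpow : Tendsto (fun n : ℕ => (n : ℝ) ^ p) atTop atTop :=
    (tendsto_rpow_atTop hp).comp tendsto_natCast_atTop_atTop
  have hO : (fun n : ℕ => exp (-a * (n : ℝ) ^ p)) =O[atTop] fun n : ℕ => (n : ℝ) ^ (-2 : ℝ) := by
    refine ((isLittleO_exp_neg_mul_rpow_atTop ha (-2 / p)).comp_tendsto hpow).isBigO.congr'
      (Eventually.of_forall fun _ => rfl) ?_
    filter_upwards with n
    simp only [Function.comp_apply]
    rw [← rpow_mul (Nat.cast_nonneg n)]
    field_simp
  exact summable_of_isBigO_nat' (summable_nat_rpow.mpr (by norm_num)) hO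

lemma tsum_exp_neg_mul_succ_le {ε : ℝ} (hε : 0 < ε) :
    ∑' j : ℕ, exp (-ε * (j + 1)) ≤ ε⁻¹ := by
  have hr : exp (-ε) < 1 := exp_lt_one_iff.2 (neg_neg_of_pos hε)
  have hgeom : ∀ j : ℕ, exp (-ε * (j + 1)) = exp (-ε) * exp (-ε) ^ j := by
    intro j
    rw [← exp_nat_mul, ← exp_add]
    ring_nf
  rw [tsum_congr hgeom, tsum_mul_left, tsum_geometric_of_lt_one (exp_nonneg _) hr,
    ← div_eq_mul_inv, div_le_iff₀ (sub_pos.2 hr)]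
  have hexp : ε + 1 ≤ exp ε := add_one_le_exp ε
  have hinv : exp ε * exp (-ε) = 1 := by rw [← exp_add, add_neg_cancel, exp_zero]
  rw [inv_mul_eq_div, le_div_iff₀ hε]
  nlinarith [exp_pos (-ε)]

theorem exists_tsum_exp_neg_mul_rpow_le (hp₀ : 0 < p) (hp₁ : p ≤ 1) {C : ℝ} (hC : 0 < C) :
    ∃ K, 0 < K ∧ ∀ k : ℝ, 1 ≤ k →
      ∑' j : ℕ, exp (-C * (k + (j + 1)) ^ p) ≤ K * k ^ (1 - p) * exp (-C * k ^ p) := by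
  set c : ℝ := 2 ^ p - 1
  have hc : 0 < c := sub_pos.2 (one_lt_rpow one_lt_two hp₀)
  have hsummable : Summable fun j : ℕ => exp (-(C * c) * ((j : ℝ) + 1) ^ p) := by
    simpa using (summable_nat_add_iff 1).2 (summable_exp_neg_mul_rpow hp₀ (mul_pos hC hc))
  set S := ∑' j : ℕ, exp (-(C * c) * ((j : ℝ) + 1) ^ p)
  have hS : 0 ≤ S := tsum_nonneg fun _ => exp_nonneg _
  refine ⟨(C * c)⁻¹ + S, by positivity, fun k hk => ?_⟩
  have hk₀ : 0 < k := zero_lt_one.trans_le hk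
  set ε := C * c * k ^ (p - 1)
  have hε : 0 < ε := by positivity
  have hε_inv : ε⁻¹ = (C * c)⁻¹ * k ^ (1 - p) := by
    rw [mul_inv, ← rpow_neg hk₀.le, neg_sub]
  have hk_pow : 1 ≤ k ^ (1 - p) := one_le_rpow hk (sub_nonneg.2 hp₁)
  have hgeom : Summable fun j : ℕ => exp (-ε * ((j : ℝ) + 1)) :=
    summable_exp_nat_mul_of_ge (neg_neg_of_pos hε) fun j => by linarith
  have hbound : ∀ j : ℕ, exp (-C * (k + (j + 1)) ^ p) ≤
      exp (-C * k ^ p) * (exp (-ε * ((j : ℝ) + 1)) + exp (-(C * c) * ((j : ℝ) + 1) ^ p)) :=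
    fun j => exp_neg_mul_add_rpow_le hp₀.le hp₁ hC.le hk₀ (by positivity)
  have hsum_bound : Summable fun j : ℕ =>
      exp (-C * k ^ p) * (exp (-ε * ((j : ℝ) + 1)) + exp (-(C * c) * ((j : ℝ) + 1) ^ p)) :=
    (hgeom.add hsummable).mul_left _
  calc ∑' j : ℕ, exp (-C * (k + (j + 1)) ^ p)
      ≤ ∑' j : ℕ,
          exp (-C * k ^ p) * (exp (-ε * ((j : ℝ) + 1)) + exp (-(C * c) * ((j : ℝ) + 1) ^ p)) :=
        (hsum_bound.of_nonneg_of_le (fun _ => exp_nonneg _) hbound).tsum_le_tsum hbound hsum_bound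
    _ = exp (-C * k ^ p) * (∑' j : ℕ, exp (-ε * ((j : ℝ) + 1)) + S) := by
        rw [tsum_mul_left, hgeom.tsum_add hsummable]
    _ ≤ exp (-C * k ^ p) * ((C * c)⁻¹ * k ^ (1 - p) + S * k ^ (1 - p)) := by
        gcongr
        · exact hε_inv ▸ tsum_exp_neg_mul_succ_le hε
        · exact le_mul_of_one_le_right hS hk_pow
    _ = ((C * c)⁻¹ + S) * k ^ (1 - p) * exp (-C * k ^ p) := by ring

end

lemma HilbertBasis.hasSum_inner_sq_nat_add {L : Type*} [NormedAddCommGroup L]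
    [InnerProductSpace ℝ L] (b : HilbertBasis ℕ ℝ L) (f : L) (n : ℕ) :
    HasSum (fun j => ⟪f, b (j + n)⟫_ℝ ^ 2) (‖f - ∑ i ∈ range n, ⟪f, b i⟫_ℝ • b i‖ ^ 2) := by
  set r := f - ∑ i ∈ range n, ⟪f, b i⟫_ℝ • b i
  have hr : ∀ m, ⟪r, b m⟫_ℝ = if m < n then 0 else ⟪f, b m⟫_ℝ := by
    intro m
    simp only [r, inner_sub_left, sum_inner, real_inner_smul_left,
      orthonormal_iff_ite.mp b.orthonormal, mul_ite, mul_one, mul_zero, sum_ite_eq', mem_range]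
    split_ifs <;> ring
  have hterm : ∀ i, ⟪r, b i⟫_ℝ * ⟪b i, r⟫_ℝ = if i < n then 0 else ⟪f, b i⟫_ℝ ^ 2 := by
    intro i
    rw [real_inner_comm r (b i), hr]
    split_ifs <;> ring
  have hparseval := (hasSum_nat_add_iff' n).mpr (b.hasSum_inner_mul_inner r r)
  simpa [hterm, real_inner_self_eq_norm_sq, sum_ite_of_true] using hparseval

theorem stmt_7_general {L : Type*} [NormedAddCommGroup L] [InnerProductSpace ℝ L]
    (b : HilbertBasis ℕ ℝ L) (d : ℕ) (hd : 1 ≤ d) (C : ℝ) (hC : 0 < C) (M : ℝ)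
    (f : L)
    (hcoeff : ∀ i : ℕ, (⟪f, b i⟫_ℝ) ^ 2 ≤ M ^ 2 * Real.exp (-C * (i : ℝ) ^ ((d : ℝ)⁻¹))) :
    ∃ C'' : ℝ, 0 < C'' ∧ ∃ k₀ : ℕ, ∀ k : ℕ, k₀ ≤ k →
      ‖f - ∑ i ∈ Finset.range (k + 1), ⟪f, b i⟫_ℝ • b i‖ ^ 2 ≤
        M ^ 2 * C'' * (k : ℝ) ^ (((d : ℝ) - 1) / d) *
          Real.exp (-C * (k : ℝ) ^ ((d : ℝ)⁻¹)) := by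
  have hd₁ : (1 : ℝ) ≤ d := Nat.one_le_cast.2 hd
  have hp₀ : 0 < (d : ℝ)⁻¹ := inv_pos.2 (zero_lt_one.trans_le hd₁)
  obtain ⟨K, hK, htail⟩ := exists_tsum_exp_neg_mul_rpow_le hp₀ (inv_le_one_of_one_le₀ hd₁) hC
  refine ⟨K, hK, 1, fun k hk => ?_⟩
  have hcast : ∀ j : ℕ, ((j + (k + 1) : ℕ) : ℝ) = k + (j + 1) := fun j => by push_cast; ring
  have hdom : HasSum (fun j : ℕ => M ^ 2 * exp (-C * ((j + (k + 1) : ℕ) : ℝ) ^ (d : ℝ)⁻¹))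
      (M ^ 2 * ∑' j : ℕ, exp (-C * ((k : ℝ) + (j + 1)) ^ (d : ℝ)⁻¹)) := by
    have hsummable := (summable_nat_add_iff (k + 1)).2 (summable_exp_neg_mul_rpow hp₀ hC)
    simp_rw [hcast] at hsummable ⊢
    exact hsummable.hasSum.mul_left _
  calc ‖f - ∑ i ∈ range (k + 1), ⟪f, b i⟫_ℝ • b i‖ ^ 2
      ≤ M ^ 2 * ∑' j : ℕ, exp (-C * ((k : ℝ) + (j + 1)) ^ (d : ℝ)⁻¹) :=
        hasSum_le (fun j => hcoeff _) (b.hasSum_inner_sq_nat_add f (k + 1)) hdom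
    _ ≤ M ^ 2 * (K * (k : ℝ) ^ (1 - (d : ℝ)⁻¹) * exp (-C * (k : ℝ) ^ (d : ℝ)⁻¹)) := by
        gcongr
        exact htail k (Nat.one_le_cast.2 hk)
    _ = M ^ 2 * K * (k : ℝ) ^ (((d : ℝ) - 1) / d) * exp (-C * (k : ℝ) ^ (d : ℝ)⁻¹) := by
        rw [sub_div, div_self (by positivity : (d : ℝ) ≠ 0), one_div]
        ring

/-- If `f` in a real Hilbert space with countable Hilbert basis `(e_i)` has Fourier
coefficients `a_i = ⟨f, e_i⟩` with `a_i² ≤ M² exp(-C i^(1/d))`, then there are `C'' > 0` and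
`k₀` (depending only on `C`, `d`) such that for `k ≥ k₀` the truncation
`g_k = ∑_{i ≤ k} a_i e_i` satisfies `‖f - g_k‖² ≤ M² C'' k^((d-1)/d) exp(-C k^(1/d))`. -/
theorem stmt_7 {L : Type*} [NormedAddCommGroup L] [InnerProductSpace ℝ L] [CompleteSpace L]
    (b : HilbertBasis ℕ ℝ L) (d : ℕ) (hd : 1 ≤ d) (C : ℝ) (hC : 0 < C) (M : ℝ) (hM : 0 ≤ M)
    (f : L)
    (hcoeff : ∀ i : ℕ, (⟪f, b i⟫_ℝ) ^ 2 ≤ M ^ 2 * Real.exp (-C * (i : ℝ) ^ ((d : ℝ)⁻¹))) :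
    ∃ C'' : ℝ, 0 < C'' ∧ ∃ k₀ : ℕ, ∀ k : ℕ, k₀ ≤ k →
      ‖f - ∑ i ∈ Finset.range (k + 1), ⟪f, b i⟫_ℝ • b i‖ ^ 2 ≤
        M ^ 2 * C'' * (k : ℝ) ^ (((d : ℝ) - 1) / d) *
          Real.exp (-C * (k : ℝ) ^ ((d : ℝ)⁻¹)) :=
  stmt_7_general b d hd C hC M f hcoeff
end

section
/- Let X be a set and let S be a finite-dimensional linear subspace of the real vector space of functions X → ℝ, with dim S = n. Let m ≥ n + 2, let x₁, …, x_m ∈ X be any points and s₁, …, s_m ∈ ℝ any thresholds. Then there exists a sign assignment σ : {1, …, m} → {−1, +1} that is not realizable by S: there is no g ∈ S such that for all i, g(x_i) > s_i whenever σ_i = +1 and g(x_i) < s_i whenever σ_i = −1. (Equivalently, the VC dimension of the subgraph sets {(x, t) ∈ X × ℝ : g(x) < t}, g ∈ S, is at most dim S + 1.) -/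
/-!
Evaluation at `x₁, …, x_m` minus the thresholds, `(g, t) ↦ g (x i) - t * s i`, gives `m` linear
functionals on `S × ℝ`, a space of dimension `n + 1 < m`. A nontrivial dependence `∑ aᵢ Lᵢ = 0`
evaluated at `(g, 1)` gives `∑ aᵢ (g (xᵢ) - sᵢ) = 0` for every `g ∈ S`. The sign pattern
`σᵢ = -sign aᵢ` cannot be realized: it would make every term `≤ 0` and some term `< 0`.
-/

open Module

theorem sum_mul_neg_of_opposite_signs {ι : Type*} [Fintype ι] {a v : ι → ℝ} {j : ι}
    (hj : a j ≠ 0) (hpos : ∀ i, 0 < a i → v i < 0) (hneg : ∀ i, a i < 0 → 0 < v i) :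
    ∑ i, a i * v i < 0 := by
  have hterm : ∀ i, a i ≠ 0 → a i * v i < 0 := fun i hi =>
    hi.lt_or_gt.elim (fun h => mul_neg_of_neg_of_pos h (hneg i h))
      (fun h => mul_neg_of_pos_of_neg h (hpos i h))
  have hle : ∀ i ∈ Finset.univ, a i * v i ≤ 0 := fun i _ => by
    by_cases hi : a i = 0
    · simp [hi]
    · exact (hterm i hi).le
  calc ∑ i, a i * v i < ∑ _i : ι, (0 : ℝ) :=
        Finset.sum_lt_sum hle ⟨j, Finset.mem_univ j, hterm j hj⟩
    _ = 0 := Finset.sum_const_zero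

theorem exists_ne_zero_forall_sum_mul_sub_eq_zero {K V ι : Type*} [Field K] [AddCommGroup V]
    [Module K V] [FiniteDimensional K V] [Fintype ι] (φ : ι → Dual K V) (s : ι → K)
    (hcard : finrank K V + 1 < Fintype.card ι) :
    ∃ a : ι → K, a ≠ 0 ∧ ∀ v, ∑ i, a i * (φ i v - s i) = 0 := by
  classical
  set ψ : ι → Dual K (V × K) := fun i => φ i ∘ₗ LinearMap.fst K V K - s i • LinearMap.snd K V K
  have hdep : ¬ LinearIndependent K ψ := fun hind => by
    have := hind.fintype_card_le_finrank
    rw [Subspace.dual_finrank_eq, finrank_prod, finrank_self] at this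
    omega
  obtain ⟨a, hsum, j, hj⟩ := Fintype.not_linearIndependent_iff.mp hdep
  refine ⟨a, Function.ne_iff.mpr ⟨j, hj⟩, fun v => ?_⟩
  simpa [ψ, LinearMap.sum_apply] using congrArg (fun f : Dual K (V × K) => f (v, 1)) hsum

/-- If `S` is an `n`-dimensional linear subspace of functions `X → ℝ` and `m ≥ n + 2`, then for
any points `x₁, …, x_m` and thresholds `s₁, …, s_m` there is a sign assignment `σ ∈ {±1}^m`
that is not realizable by any `g ∈ S` (with strict inequalities `g(x_i) > s_i` when `σ_i = 1`
and `g(x_i) < s_i` when `σ_i = -1`). -/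
theorem stmt_8 {X : Type*} (S : Submodule ℝ (X → ℝ)) [FiniteDimensional ℝ S] (n : ℕ)
    (hn : Module.finrank ℝ S = n) (m : ℕ) (hm : n + 2 ≤ m) (x : Fin m → X) (s : Fin m → ℝ) :
    ∃ σ : Fin m → ℝ, (∀ i, σ i = 1 ∨ σ i = -1) ∧
      ¬ ∃ g ∈ S, ∀ i, (σ i = 1 → s i < g (x i)) ∧ (σ i = -1 → g (x i) < s i) := by
  obtain ⟨a, ha, hrel⟩ := exists_ne_zero_forall_sum_mul_sub_eq_zero
    (fun i => LinearMap.proj (x i) ∘ₗ S.subtype) s (by simp only [Fintype.card_fin]; omega)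
  obtain ⟨j, hj⟩ := Function.ne_iff.mp ha
  refine ⟨fun i => if 0 < a i then -1 else 1, fun i => by dsimp only; split_ifs <;> simp, ?_⟩
  rintro ⟨g, hg, hreal⟩
  have hneg := sum_mul_neg_of_opposite_signs (v := fun i => g (x i) - s i) hj
    (fun i hi => sub_neg.mpr ((hreal i).2 (if_pos hi)))
    (fun i hi => sub_pos.mpr ((hreal i).1 (if_neg (not_lt.mpr hi.le))))
  exact hneg.ne (hrel ⟨g, hg⟩)
end
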